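/- Let f : ℝ → ℂ be continuous and integrable with f̂ supported in (-∞, 0]. Then F(z) = ∫_{-∞}^0 f̂(ξ) exp(2πi z ξ) dξ is holomorphic on the lower half-plane {z : Im z < 0}. -/

import Mathlib

open Real MeasureTheory Complex FourierTransform Set

/-! The integrand is dominated on every half-plane `Im z ≤ -δ` by `C e^{2πδξ}`, and its
`z`-derivative by `2πC |ξ| e^{2πδξ}`, both integrable on `ξ < 0`; differentiating under the
integral sign gives holomorphy. The bound `C` on `f̂` is `‖f‖₁`, and `f̂` is continuous, being the
Fourier transform of an integrable function. -/

lemma integrableOn_abs_mul_exp_mul_Iio {c : ℝ} (hc : 0 < c) :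
    IntegrableOn (fun x : ℝ => |x| * Real.exp (c * x)) (Iio 0) := by
  have h := integrableOn_rpow_mul_exp_neg_mul_rpow (s := 1) (p := 1) (by norm_num) zero_lt_one hc
  rw [← neg_zero] at h
  refine h.comp_neg_Iio.congr_fun (fun x hx => ?_) measurableSet_Iio
  simp only [Real.rpow_one, neg_mul, abs_of_neg (mem_Iio.mp hx)]
  ring_nf

lemma norm_cexp_two_pi_I_mul_le {z : ℂ} {δ ξ : ℝ} (hz : z.im ≤ -δ) (hξ : ξ ≤ 0) :
    ‖cexp (2 * π * I * z * ξ)‖ ≤ Real.exp (2 * π * δ * ξ) := by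
  have hre : (2 * π * I * z * ξ).re = 2 * π * ξ * -z.im := by
    simp [mul_re, mul_im]
    ring
  rw [norm_exp, hre, Real.exp_le_exp]
  have : 2 * π * ξ ≤ 0 := mul_nonpos_of_nonneg_of_nonpos (by positivity) hξ
  nlinarith

lemma hasDerivAt_cexp_two_pi_I_mul (ξ : ℝ) (z : ℂ) :
    HasDerivAt (fun w : ℂ => cexp (2 * π * I * w * ξ))
      (cexp (2 * π * I * z * ξ) * (2 * π * I * ξ)) z := by
  simpa using ((hasDerivAt_id z).const_mul (2 * π * I) |>.mul_const (ξ : ℂ)).cexp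

section LowerHalfPlane

variable {g : ℝ → ℂ} {C : ℝ}

lemma norm_mul_cexp_two_pi_I_mul_le (hC : ∀ ξ, ‖g ξ‖ ≤ C) {z : ℂ} {δ ξ : ℝ} (hz : z.im ≤ -δ)
    (hξ : ξ ≤ 0) : ‖g ξ * cexp (2 * π * I * z * ξ)‖ ≤ C * Real.exp (2 * π * δ * ξ) := by
  rw [norm_mul]
  exact mul_le_mul (hC ξ) (norm_cexp_two_pi_I_mul_le hz hξ) (norm_nonneg _)
    ((norm_nonneg _).trans (hC ξ))

lemma differentiableAt_integral_Iio_mul_cexp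
    (hg : AEStronglyMeasurable g (volume.restrict (Iio 0))) (hC : ∀ ξ, ‖g ξ‖ ≤ C)
    {z₀ : ℂ} (hz₀ : z₀.im < 0) :
    DifferentiableAt ℂ (fun z => ∫ ξ in Iio 0, g ξ * cexp (2 * π * I * z * ξ)) z₀ := by
  set δ := -z₀.im / 2 with hδ_def
  have hδ : 0 < δ := by linarith
  have him : ∀ z ∈ Metric.ball z₀ δ, z.im ≤ -δ := fun z hz => by
    have := (abs_im_le_norm (z - z₀)).trans (mem_ball_iff_norm.mp hz).le
    rw [sub_im, abs_le] at this
    linarith [this.2]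
  have hmeas : ∀ z : ℂ, AEStronglyMeasurable (fun ξ : ℝ => g ξ * cexp (2 * π * I * z * ξ))
      (volume.restrict (Iio 0)) := fun z => hg.mul (by fun_prop)
  refine (hasDerivAt_integral_of_dominated_loc_of_deriv_le
    (F' := fun z ξ => g ξ * (cexp (2 * π * I * z * ξ) * (2 * π * I * ξ)))
    (bound := fun ξ => C * (2 * π) * (|ξ| * Real.exp (2 * π * δ * ξ)))
    (Metric.ball_mem_nhds z₀ hδ) (.of_forall hmeas) ?_ ?_ ?_ ?_ ?_).2.differentiableAt
  · refine Integrable.mono' ((integrableOn_exp_mul_Iic (a := 2 * π * δ) (by positivity) 0).mono_set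
      Iio_subset_Iic_self |>.const_mul C) (hmeas z₀) ?_
    filter_upwards [ae_restrict_mem measurableSet_Iio] with ξ hξ
    exact norm_mul_cexp_two_pi_I_mul_le hC (him z₀ (Metric.mem_ball_self hδ)) (le_of_lt hξ)
  · exact hg.mul (by fun_prop)
  · filter_upwards [ae_restrict_mem measurableSet_Iio] with ξ hξ z hz
    have hξI : ‖(2 * π * I * ξ : ℂ)‖ = 2 * π * |ξ| := by
      simp [Complex.norm_real, abs_of_pos pi_pos]
    calc ‖g ξ * (cexp (2 * π * I * z * ξ) * (2 * π * I * ξ))‖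
        = ‖g ξ * cexp (2 * π * I * z * ξ)‖ * (2 * π * |ξ|) := by
          rw [← mul_assoc, norm_mul, hξI]
      _ ≤ C * Real.exp (2 * π * δ * ξ) * (2 * π * |ξ|) := by
          gcongr
          exact norm_mul_cexp_two_pi_I_mul_le hC (him z hz) (le_of_lt hξ)
      _ = C * (2 * π) * (|ξ| * Real.exp (2 * π * δ * ξ)) := by ring
  · exact (integrableOn_abs_mul_exp_mul_Iio (by positivity)).const_mul _
  · exact .of_forall fun ξ z _ => (hasDerivAt_cexp_two_pi_I_mul ξ z).const_mul (g ξ)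

end LowerHalfPlane

lemma fourier_eq_integral_mul_cexp (f : ℝ → ℂ) (ξ : ℝ) :
    𝓕 f ξ = ∫ x, f x * cexp (-(2 * π * I * ξ * x)) := by
  rw [Real.fourier_real_eq_integral_exp_smul]
  congr 1 with x
  rw [smul_eq_mul, mul_comm]
  push_cast
  ring_nf

theorem holomorphic_lower_half_plane_general (f : ℝ → ℂ) (hi : Integrable f)
    (fhat : ℝ → ℂ)
    (hfhat : ∀ ξ, fhat ξ = ∫ x, f x * Complex.exp (-(2 * π * Complex.I * ξ * x))) :
    DifferentiableOn ℂ
      (fun z : ℂ => ∫ ξ in Set.Iio (0 : ℝ), fhat ξ * Complex.exp (2 * π * Complex.I * z * ξ))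
      {z : ℂ | z.im < 0} := by
  obtain rfl : fhat = 𝓕 f := funext fun ξ => (hfhat ξ).trans (fourier_eq_integral_mul_cexp f ξ).symm
  have hcont : Continuous (𝓕 f) :=
    VectorFourier.fourierIntegral_continuous Real.continuous_fourierChar (by fun_prop) hi
  have hbound : ∀ ξ, ‖𝓕 f ξ‖ ≤ ∫ x, ‖f x‖ := fun ξ =>
    VectorFourier.norm_fourierIntegral_le_integral_norm _ _ _ _ _
  exact fun z hz => (differentiableAt_integral_Iio_mul_cexp hcont.aestronglyMeasurable hbound
    hz).differentiableWithinAt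

theorem holomorphic_lower_half_plane (f : ℝ → ℂ) (hc : Continuous f) (hi : Integrable f)
    (fhat : ℝ → ℂ)
    (hfhat : ∀ ξ, fhat ξ = ∫ x, f x * Complex.exp (-(2 * π * Complex.I * ξ * x)))
    (hsupp : ∀ ξ > (0 : ℝ), fhat ξ = 0) :
    DifferentiableOn ℂ
      (fun z : ℂ => ∫ ξ in Set.Iio (0 : ℝ), fhat ξ * Complex.exp (2 * π * Complex.I * z * ξ))
      {z : ℂ | z.im < 0} :=
  holomorphic_lower_half_plane_general f hi fhat hfhat
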